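/- arXiv:math/0111050 — 6 statements merged into one kernel-verified Lean document; each statement's English description precedes it below -/
import Mathlib

section
/- Let p and q be integers with 0 < p < q, and let BS(q,p) be the Baumslag–Solitar group with generators a, b. Then the element a has at most logarithmic distortion: there exists a constant C > 0 such that for every integer n ≥ 1 the word length of aⁿ with respect to the generating set {a, b} satisfies ‖aⁿ‖ ≤ C·log(n+1). -/
/-- The word length of `g` with respect to a generating set `S`:
the smallest `n` such that `g` is a product of `n` elements of `S ∪ S⁻¹`. -/
noncomputable def wordLength {G : Type*} [Group G] (S : Set G) (g : G) : ℕ :=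
  sInf {n : ℕ | ∃ w : List G, w.length = n ∧ (∀ x ∈ w, x ∈ S ∨ x⁻¹ ∈ S) ∧ w.prod = g}

/-- The Baumslag–Solitar group `BS(q,p) = ⟨a, b ∣ a^q = b a^p b⁻¹⟩`. -/
abbrev BaumslagSolitar (q p : ℤ) : Type :=
  PresentedGroup
    ({FreeGroup.of true ^ q *
        (FreeGroup.of false * FreeGroup.of true ^ p * (FreeGroup.of false)⁻¹)⁻¹} :
      Set (FreeGroup Bool))

/-- The generator `a` of `BS(q,p)`. -/
noncomputable def BSa (q p : ℤ) : BaumslagSolitar q p := PresentedGroup.of true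

/-- The generator `b` of `BS(q,p)`. -/
noncomputable def BSb (q p : ℤ) : BaumslagSolitar q p := PresentedGroup.of false

/-!
Write `n = Q m + r` with `r < Q`. The relation `a ^ Q = b a ^ P b⁻¹` gives
`a ^ n = a ^ r · b a ^ (P m) b⁻¹`, so a word for `a ^ n` costs at most `Q + 1` letters more than
one for `a ^ (P m)`, and `P m ≤ (P / Q) n`. After `k` such steps the exponent has shrunk by the
factor `(P / Q) ^ k`, so `‖a ^ n‖ = O(k)` as soon as `n ≤ (Q / P) ^ k`, i.e. for
`k ≈ log n / log (Q / P)`.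
-/

open Real

section WordLength

variable {G : Type*} [Group G]

theorem wordLength_prod_le_length {S : Set G} {w : List G} (hw : ∀ x ∈ w, x ∈ S ∨ x⁻¹ ∈ S) :
    wordLength S w.prod ≤ w.length :=
  Nat.sInf_le ⟨w, rfl, hw, rfl⟩

theorem exists_word_pow_of_pow_eq_conj {a b : G} {P Q : ℕ} (hQ : 0 < Q)
    (hab : a ^ Q = b * a ^ P * b⁻¹) (k n : ℕ) (hn : P ^ k * n ≤ Q ^ k) :
    ∃ w : List G, (∀ x ∈ w, x ∈ ({a, b} : Set G) ∨ x⁻¹ ∈ ({a, b} : Set G)) ∧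
      w.prod = a ^ n ∧ w.length ≤ (Q + 2) * k + 1 := by
  induction k generalizing n with
  | zero =>
    obtain rfl | rfl : n = 0 ∨ n = 1 := by simp at hn; omega
    exacts [⟨[], by simp⟩, ⟨[a], by simp⟩]
  | succ k ih =>
    obtain ⟨m, r, hr, rfl⟩ : ∃ m r, r < Q ∧ n = r + Q * m :=
      ⟨n / Q, n % Q, Nat.mod_lt n hQ, (Nat.mod_add_div n Q).symm⟩
    have hPm : P ^ k * (P * m) ≤ Q ^ k := by
      refine Nat.le_of_mul_le_mul_left ?_ hQ
      calc Q * (P ^ k * (P * m)) = P ^ (k + 1) * (Q * m) := by ring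
        _ ≤ P ^ (k + 1) * (r + Q * m) := Nat.mul_le_mul_left _ (Nat.le_add_left _ _)
        _ ≤ Q ^ (k + 1) := hn
        _ = Q * Q ^ k := pow_succ' Q k
    obtain ⟨w, hw, hprod, hlen⟩ := ih (P * m) hPm
    refine ⟨List.replicate r a ++ b :: w ++ [b⁻¹], ?_, ?_, ?_⟩
    · simp only [List.mem_append, List.mem_replicate, List.mem_cons,
        List.not_mem_nil, or_false]
      rintro x ((⟨-, rfl⟩ | rfl | hx) | rfl)
      exacts [by simp, by simp, hw x hx, by simp]
    · have hconj : a ^ (Q * m) = b * a ^ (P * m) * b⁻¹ := by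
        rw [pow_mul, hab, conj_pow, ← pow_mul]
      simp only [List.prod_append, List.prod_replicate, List.prod_cons, List.prod_nil,
        hprod, pow_add, hconj, mul_one, mul_assoc]
    · simp only [List.length_append, List.length_replicate, List.length_cons,
        List.length_nil]
      linarith

theorem wordLength_pow_le_of_pow_eq_conj {a b : G} {P Q : ℕ} (hQ : 0 < Q)
    (hab : a ^ Q = b * a ^ P * b⁻¹) {k n : ℕ} (hn : P ^ k * n ≤ Q ^ k) :
    wordLength {a, b} (a ^ n) ≤ (Q + 2) * k + 1 := by
  obtain ⟨w, hw, hprod, hlen⟩ := exists_word_pow_of_pow_eq_conj hQ hab k n hn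
  exact hprod ▸ (wordLength_prod_le_length hw).trans hlen

end WordLength

theorem exists_pow_ge_and_le_mul_log {ρ : ℝ} (hρ : 1 < ρ) :
    ∃ c : ℝ, 0 < c ∧ ∀ x : ℝ, 1 ≤ x → ∃ k : ℕ, x ≤ ρ ^ k ∧ (k : ℝ) + 1 ≤ c * log (x + 1) := by
  have hlogρ : 0 < log ρ := log_pos hρ
  have hlog2 : 0 < log 2 := log_pos one_lt_two
  refine ⟨1 / log ρ + 2 / log 2, by positivity, fun x hx => ⟨⌈log x / log ρ⌉₊, ?_, ?_⟩⟩
  · rw [← log_le_log_iff (by positivity) (by positivity), log_pow, ← div_le_iff₀ hlogρ]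
    exact Nat.le_ceil _
  · have hlogx : log x ≤ log (x + 1) := log_le_log (by positivity) (by linarith)
    have hlog2x : log 2 ≤ log (x + 1) := log_le_log two_pos (by linarith)
    calc (⌈log x / log ρ⌉₊ : ℝ) + 1 ≤ log x / log ρ + 2 := by
          linarith [Nat.ceil_lt_add_one (div_nonneg (log_nonneg hx) hlogρ.le)]
      _ ≤ log (x + 1) / log ρ + 2 * (log (x + 1) / log 2) := by
          have h1 : log x / log ρ ≤ log (x + 1) / log ρ := by gcongr
          linarith [(one_le_div hlog2).2 hlog2x]
      _ = (1 / log ρ + 2 / log 2) * log (x + 1) := by ring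

theorem BSa_zpow_eq_conj (q p : ℤ) : BSa q p ^ q = BSb q p * BSa q p ^ p * (BSb q p)⁻¹ := by
  have h := PresentedGroup.mk_eq_mk_of_mul_inv_mem <| Set.mem_singleton <|
    FreeGroup.of true ^ q * (FreeGroup.of false * FreeGroup.of true ^ p * (FreeGroup.of false)⁻¹)⁻¹
  simp only [map_mul, map_zpow, map_inv] at h
  exact h

/-- In `BS(q,p)` with `0 < p < q`, the element `a` has at most logarithmic
distortion: `‖aⁿ‖ ≤ C · log (n+1)` for all `n ≥ 1`. -/
theorem BS_a_log_distortion (p q : ℤ) (hp : 0 < p) (hpq : p < q) :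
    ∃ C : ℝ, 0 < C ∧ ∀ n : ℤ, 1 ≤ n →
      (wordLength ({BSa q p, BSb q p} : Set (BaumslagSolitar q p)) ((BSa q p) ^ n) : ℝ) ≤
        C * Real.log ((n : ℝ) + 1) := by
  lift p to ℕ using hp.le
  lift q to ℕ using by omega
  have hpq' : (p : ℝ) < q := by exact_mod_cast hpq
  have hp' : (0 : ℝ) < p := by exact_mod_cast hp
  obtain ⟨c, hc, hk⟩ := exists_pow_ge_and_le_mul_log ((one_lt_div hp').2 hpq')
  refine ⟨(q + 2) * c, by positivity, fun n hn => ?_⟩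
  lift n to ℕ using by omega
  obtain ⟨k, hnk, hkc⟩ := hk n (by exact_mod_cast hn)
  have hrel : BSa q p ^ q = BSb q p * BSa q p ^ p * (BSb q p)⁻¹ := by
    exact_mod_cast BSa_zpow_eq_conj q p
  have hnk' : p ^ k * n ≤ q ^ k := by
    rw [div_pow, le_div_iff₀ (by positivity), mul_comm] at hnk
    exact_mod_cast hnk
  have hword : (wordLength {BSa q p, BSb q p} (BSa q p ^ n) : ℝ) ≤ (q + 2) * k + 1 := by
    exact_mod_cast wordLength_pow_le_of_pow_eq_conj (by omega) hrel hnk'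
  rw [zpow_natCast (BSa q p) n, Int.cast_natCast]
  calc (wordLength {BSa q p, BSb q p} (BSa q p ^ n) : ℝ) ≤ (q + 2) * k + 1 := hword
    _ ≤ (q + 2) * (k + 1) := by nlinarith
    _ ≤ (q + 2) * c * log (n + 1) := by rw [mul_assoc]; gcongr
end

section
/- Let u₁, u₂ : (0,∞) → (0,∞) be nondecreasing functions and c ≥ 1 a constant such that (1/c)·u₁(s/c) ≤ u₂(s) ≤ c·u₁(c·s) for all s > 0. Let v₁, v₂ : (0,∞) → (0,∞) satisfy v₁(t)·u₁(v₁(t)) = t and v₂(t)·u₂(v₂(t)) = t for all t > 0. Then (1/c)·v₁(t) ≤ v₂(t) ≤ c·v₁(t) for all t > 0. -/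
/-- Lemma 3.1.A: equivalent growth functions `u₁ ∼ u₂` have equivalent
inverse filling functions `v₁ ∼ v₂`. -/
theorem filling_functions_equivalent
    (u₁ u₂ v₁ v₂ : ℝ → ℝ) (c : ℝ) (hc : 1 ≤ c)
    (hu₁_pos : ∀ s : ℝ, 0 < s → 0 < u₁ s)
    (hu₂_pos : ∀ s : ℝ, 0 < s → 0 < u₂ s)
    (hu₁_mono : ∀ s t : ℝ, 0 < s → s ≤ t → u₁ s ≤ u₁ t)
    (hu₂_mono : ∀ s t : ℝ, 0 < s → s ≤ t → u₂ s ≤ u₂ t)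
    (hle : ∀ s : ℝ, 0 < s → (1 / c) * u₁ (s / c) ≤ u₂ s ∧ u₂ s ≤ c * u₁ (c * s))
    (hv₁_pos : ∀ t : ℝ, 0 < t → 0 < v₁ t)
    (hv₂_pos : ∀ t : ℝ, 0 < t → 0 < v₂ t)
    (hv₁ : ∀ t : ℝ, 0 < t → v₁ t * u₁ (v₁ t) = t)
    (hv₂ : ∀ t : ℝ, 0 < t → v₂ t * u₂ (v₂ t) = t) :
    ∀ t : ℝ, 0 < t → (1 / c) * v₁ t ≤ v₂ t ∧ v₂ t ≤ c * v₁ t := by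
  intro t ht
  have hc0 : (0:ℝ) < c := lt_of_lt_of_le one_pos hc
  have h1 := hv₁_pos t ht
  have h2 := hv₂_pos t ht
  constructor
  · by_contra h
    push_neg at h
    -- v₂ t < v₁ t / c, i.e. c * v₂ t < v₁ t
    have hcv : c * v₂ t < v₁ t := by
      have := (mul_lt_mul_iff_right₀ hc0).mpr h
      calc c * v₂ t < c * (1 / c * v₁ t) := this
        _ = v₁ t := by field_simp
    have hu2le : u₂ (v₂ t) ≤ c * u₁ (c * v₂ t) := (hle (v₂ t) h2).2
    have hmono : u₁ (c * v₂ t) ≤ u₁ (v₁ t) :=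
      hu₁_mono _ _ (by positivity) hcv.le
    have : t < t := by
      calc t = v₂ t * u₂ (v₂ t) := (hv₂ t ht).symm
        _ ≤ v₂ t * (c * u₁ (c * v₂ t)) := by
            exact mul_le_mul_of_nonneg_left hu2le h2.le
        _ = (c * v₂ t) * u₁ (c * v₂ t) := by ring
        _ ≤ (c * v₂ t) * u₁ (v₁ t) := by
            exact mul_le_mul_of_nonneg_left hmono (by positivity)
        _ < v₁ t * u₁ (v₁ t) := by
            exact mul_lt_mul_of_pos_right hcv (hu₁_pos _ h1)
        _ = t := hv₁ t ht
    exact lt_irrefl t this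
  · by_contra h
    push_neg at h
    -- c * v₁ t < v₂ t, so v₁ t < v₂ t / c
    have hdiv : v₁ t < v₂ t / c := by
      rw [lt_div_iff₀ hc0]; linarith [mul_comm c (v₁ t)]
    have hu2ge : (1 / c) * u₁ (v₂ t / c) ≤ u₂ (v₂ t) := (hle (v₂ t) h2).1
    have hmono : u₁ (v₁ t) ≤ u₁ (v₂ t / c) := hu₁_mono _ _ h1 hdiv.le
    have : t < t := by
      calc t = v₁ t * u₁ (v₁ t) := (hv₁ t ht).symm
        _ ≤ v₁ t * u₁ (v₂ t / c) := mul_le_mul_of_nonneg_left hmono h1.le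
        _ < (v₂ t / c) * u₁ (v₂ t / c) := by
            exact mul_lt_mul_of_pos_right hdiv (hu₁_pos _ (by positivity))
        _ = v₂ t * ((1 / c) * u₁ (v₂ t / c)) := by ring
        _ ≤ v₂ t * u₂ (v₂ t) := mul_le_mul_of_nonneg_left hu2ge h2.le
        _ = t := hv₂ t ht
    exact lt_irrefl t this
end

section
/- Let s > 0 and let f, g : ℝ² → ℝ be continuously differentiable functions such that ∂g/∂x(x,y) − ∂f/∂y(x,y) = 1 for all (x,y) ∈ ℝ². Then there exists a point z in the closed disc of radius s centered at the origin such that √(f(z)² + g(z)²) ≥ s/2. -/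
/-!
Pull `α = f dx + g dy` back along polar coordinates `(r, θ) ↦ (r cos θ, r sin θ)`. Since
`dx ∧ dy` pulls back to `r dr ∧ dθ`, Green's theorem on the rectangle `[0, s] × [0, 2π]` gives
`∮_{|z| = s} α = ∫∫ r dr dθ = π s²`: the sides `θ = 0` and `θ = 2π` cancel and the side `r = 0`
is a point. Hence the integrand `α(∂_θ)` is at least its mean `s² / 2` at some angle, while it is
at most `s |α|` by Cauchy–Schwarz.
-/

open Real MeasureTheory Set

@[fun_prop]
lemma contDiff_polarCoord_symm {n : WithTop ℕ∞} : ContDiff ℝ n polarCoord.symm := by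
  change ContDiff ℝ n fun p : ℝ × ℝ => (p.1 * cos p.2, p.1 * sin p.2)
  fun_prop

@[fun_prop]
lemma differentiable_polarCoord_symm : Differentiable ℝ polarCoord.symm :=
  (contDiff_polarCoord_symm (n := 1)).differentiable one_ne_zero

lemma mul_cos_sub_mul_sin_le_sqrt (a b θ : ℝ) : b * cos θ - a * sin θ ≤ √(a ^ 2 + b ^ 2) :=
  le_sqrt_of_sq_le <| by
    nlinarith [sq_nonneg (a * cos θ + b * sin θ), sin_sq_add_cos_sq θ]

lemma exists_mem_Ioc_integral_le_mul {f : ℝ → ℝ} {a b : ℝ} (hab : a < b)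
    (hf : IntervalIntegrable f volume a b) : ∃ x ∈ Ioc a b, ∫ x in a..b, f x ≤ (b - a) * f x := by
  obtain ⟨x, hx, hle⟩ := exists_setAverage_le (μ := volume) (s := Ioc a b) (f := f)
    (by simp [hab]) (by simp) ((intervalIntegrable_iff_integrableOn_Ioc_of_le hab.le).1 hf)
  refine ⟨x, hx, ?_⟩
  rwa [setAverage_eq, ← intervalIntegral.integral_of_le hab.le, Real.volume_real_Ioc_of_le hab.le,
    smul_eq_mul, inv_mul_le_iff₀ (sub_pos.2 hab)] at hle

lemma ContinuousLinearMap.apply_prodMk_eq (L : ℝ × ℝ →L[ℝ] ℝ) (a b : ℝ) :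
    L (a, b) = a * L (1, 0) + b * L (0, 1) := by
  have : ((a, b) : ℝ × ℝ) = a • ((1 : ℝ), (0 : ℝ)) + b • ((0 : ℝ), (1 : ℝ)) := by simp
  rw [this, L.map_add, L.map_smul, L.map_smul, smul_eq_mul, smul_eq_mul]

lemma HasFDerivAt.apply_one_zero_eq {E : Type*} [NormedAddCommGroup E] [NormedSpace ℝ E]
    {F : ℝ × ℝ → E} {F' : ℝ × ℝ →L[ℝ] E} {q : ℝ × ℝ} (hF : HasFDerivAt F F' q) {d : E}
    (hd : HasDerivAt (fun r => F (r, q.2)) d q.1) : F' (1, 0) = d :=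
  (hF.comp_hasDerivAt q.1 ((hasDerivAt_id q.1).prodMk (hasDerivAt_const q.1 q.2))).unique hd

lemma HasFDerivAt.apply_zero_one_eq {E : Type*} [NormedAddCommGroup E] [NormedSpace ℝ E]
    {F : ℝ × ℝ → E} {F' : ℝ × ℝ →L[ℝ] E} {q : ℝ × ℝ} (hF : HasFDerivAt F F' q) {d : E}
    (hd : HasDerivAt (fun θ => F (q.1, θ)) d q.2) : F' (0, 1) = d :=
  (hF.comp_hasDerivAt q.2 ((hasDerivAt_const q.2 q.1).prodMk (hasDerivAt_id q.2))).unique hd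

noncomputable def curl (f g : ℝ × ℝ → ℝ) (z : ℝ × ℝ) : ℝ :=
  fderiv ℝ g z (1, 0) - fderiv ℝ f z (0, 1)

/-- `polarPullbackR f g dr + polarPullbackθ f g dθ` is the pullback of `f dx + g dy` along
`polarCoord.symm`. -/
noncomputable def polarPullbackR (f g : ℝ × ℝ → ℝ) (q : ℝ × ℝ) : ℝ :=
  f (polarCoord.symm q) * cos q.2 + g (polarCoord.symm q) * sin q.2

noncomputable def polarPullbackθ (f g : ℝ × ℝ → ℝ) (q : ℝ × ℝ) : ℝ :=
  q.1 * (g (polarCoord.symm q) * cos q.2 - f (polarCoord.symm q) * sin q.2)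

section PolarPullback

variable {f g : ℝ × ℝ → ℝ}

lemma contDiff_polarPullbackR {n : WithTop ℕ∞} (hf : ContDiff ℝ n f) (hg : ContDiff ℝ n g) :
    ContDiff ℝ n (polarPullbackR f g) := by
  unfold polarPullbackR; fun_prop

lemma contDiff_polarPullbackθ {n : WithTop ℕ∞} (hf : ContDiff ℝ n f) (hg : ContDiff ℝ n g) :
    ContDiff ℝ n (polarPullbackθ f g) := by
  unfold polarPullbackθ; fun_prop

lemma hasDerivAt_polarCoord_symm_radius (r θ : ℝ) :
    HasDerivAt (fun r => polarCoord.symm (r, θ)) (cos θ, sin θ) r :=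
  (hasDerivAt_mul_const (cos θ)).prodMk (hasDerivAt_mul_const (sin θ))

lemma hasDerivAt_polarCoord_symm_angle (r θ : ℝ) :
    HasDerivAt (fun θ => polarCoord.symm (r, θ)) (-(r * sin θ), r * cos θ) θ :=
  ((hasDerivAt_cos θ).const_mul r).prodMk ((hasDerivAt_sin θ).const_mul r) |>.congr_deriv
    (by simp)

lemma hasDerivAt_polarPullbackθ_radius (r θ : ℝ)
    (hf : DifferentiableAt ℝ f (polarCoord.symm (r, θ)))
    (hg : DifferentiableAt ℝ g (polarCoord.symm (r, θ))) :
    HasDerivAt (fun r => polarPullbackθ f g (r, θ))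
      (g (polarCoord.symm (r, θ)) * cos θ - f (polarCoord.symm (r, θ)) * sin θ +
        r * (fderiv ℝ g (polarCoord.symm (r, θ)) (cos θ, sin θ) * cos θ -
          fderiv ℝ f (polarCoord.symm (r, θ)) (cos θ, sin θ) * sin θ)) r := by
  have hf' := hf.hasFDerivAt.comp_hasDerivAt r (hasDerivAt_polarCoord_symm_radius r θ)
  have hg' := hg.hasFDerivAt.comp_hasDerivAt r (hasDerivAt_polarCoord_symm_radius r θ)
  exact ((hasDerivAt_id' r).mul ((hg'.mul_const (cos θ)).sub (hf'.mul_const (sin θ)))).congr_deriv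
    (by simp only [Function.comp_apply, Pi.sub_apply]; ring)

lemma hasDerivAt_polarPullbackR_angle (r θ : ℝ)
    (hf : DifferentiableAt ℝ f (polarCoord.symm (r, θ)))
    (hg : DifferentiableAt ℝ g (polarCoord.symm (r, θ))) :
    HasDerivAt (fun θ => polarPullbackR f g (r, θ))
      (fderiv ℝ f (polarCoord.symm (r, θ)) (-(r * sin θ), r * cos θ) * cos θ
        - f (polarCoord.symm (r, θ)) * sin θ
        + (fderiv ℝ g (polarCoord.symm (r, θ)) (-(r * sin θ), r * cos θ) * sin θ
        + g (polarCoord.symm (r, θ)) * cos θ)) θ := by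
  have hf' := hf.hasFDerivAt.comp_hasDerivAt θ (hasDerivAt_polarCoord_symm_angle r θ)
  have hg' := hg.hasFDerivAt.comp_hasDerivAt θ (hasDerivAt_polarCoord_symm_angle r θ)
  exact ((hf'.mul (hasDerivAt_cos θ)).add (hg'.mul (hasDerivAt_sin θ))).congr_deriv
    (by simp only [Function.comp_apply]; ring)

-- `d` commutes with pullback, and `dx ∧ dy` pulls back to `r dr ∧ dθ`.
lemma fderiv_polarPullbackθ_sub_fderiv_polarPullbackR (hf : Differentiable ℝ f)
    (hg : Differentiable ℝ g) (q : ℝ × ℝ) :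
    fderiv ℝ (polarPullbackθ f g) q (1, 0) - fderiv ℝ (polarPullbackR f g) q (0, 1) =
      q.1 * curl f g (polarCoord.symm q) := by
  obtain ⟨r, θ⟩ := q
  have hθ : DifferentiableAt ℝ (polarPullbackθ f g) (r, θ) := by
    unfold polarPullbackθ; fun_prop
  have hR : DifferentiableAt ℝ (polarPullbackR f g) (r, θ) := by
    unfold polarPullbackR; fun_prop
  rw [hθ.hasFDerivAt.apply_one_zero_eq (hasDerivAt_polarPullbackθ_radius r θ (hf _) (hg _)),
    hR.hasFDerivAt.apply_zero_one_eq (hasDerivAt_polarPullbackR_angle r θ (hf _) (hg _)), curl]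
  set z := polarCoord.symm (r, θ)
  rw [(fderiv ℝ f z).apply_prodMk_eq (cos θ), (fderiv ℝ g z).apply_prodMk_eq (cos θ),
    (fderiv ℝ f z).apply_prodMk_eq (-(r * sin θ)), (fderiv ℝ g z).apply_prodMk_eq (-(r * sin θ))]
  linear_combination (r * (fderiv ℝ g z (1, 0) - fderiv ℝ f z (0, 1))) * sin_sq_add_cos_sq θ

theorem integral_polarPullbackθ_eq_integral_curl (hf : ContDiff ℝ 1 f) (hg : ContDiff ℝ 1 g)
    (s : ℝ) :
    ∫ θ in 0..2 * π, polarPullbackθ f g (s, θ) =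
      ∫ r in 0..s, ∫ θ in 0..2 * π, r * curl f g (polarCoord.symm (r, θ)) := by
  have hθ := contDiff_polarPullbackθ hf hg
  have hR := contDiff_polarPullbackR hf hg
  have green := integral2_divergence_prod_of_hasFDerivAt (polarPullbackθ f g)
    (-polarPullbackR f g) (fderiv ℝ (polarPullbackθ f g)) (-fderiv ℝ (polarPullbackR f g))
    0 0 s (2 * π) hθ.continuous.continuousOn hR.continuous.neg.continuousOn
    (fun q _ => (hθ.differentiable one_ne_zero q).hasFDerivAt)
    (fun q _ => (hR.differentiable one_ne_zero q).hasFDerivAt.neg)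
    (ContinuousOn.integrableOn_compact (isCompact_uIcc.prod isCompact_uIcc) (by
      have := hθ.continuous_fderiv one_ne_zero
      have := hR.continuous_fderiv one_ne_zero
      fun_prop))
  simp only [Pi.neg_apply, neg_apply, ← sub_eq_add_neg,
    fderiv_polarPullbackθ_sub_fderiv_polarPullbackR (hf.differentiable one_ne_zero)
      (hg.differentiable one_ne_zero)] at green
  rw [green]
  simp [polarPullbackR, polarPullbackθ]

end PolarPullback

/-- If `α = f dx + g dy` is a primitive of the standard area form on `ℝ²`
(i.e. `∂g/∂x − ∂f/∂y ≡ 1`), then on the closed disc of radius `s` the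
pointwise Euclidean norm of `α` is somewhere at least `s/2`. -/
theorem primitive_of_area_form_lower_bound (s : ℝ) (hs : 0 < s)
    (f g : ℝ × ℝ → ℝ) (hf : ContDiff ℝ 1 f) (hg : ContDiff ℝ 1 g)
    (h : ∀ z : ℝ × ℝ, fderiv ℝ g z (1, 0) - fderiv ℝ f z (0, 1) = 1) :
    ∃ z : ℝ × ℝ, Real.sqrt (z.1 ^ 2 + z.2 ^ 2) ≤ s ∧
      s / 2 ≤ Real.sqrt (f z ^ 2 + g z ^ 2) := by
  have hcurl : ∀ z, curl f g z = 1 := h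
  have hcirc : ∫ θ in 0..2 * π, polarPullbackθ f g (s, θ) = π * s ^ 2 := by
    simp only [integral_polarPullbackθ_eq_integral_curl hf hg, hcurl, mul_one,
      intervalIntegral.integral_const, smul_eq_mul]
    rw [intervalIntegral.integral_const_mul, integral_id]
    ring
  have hcont : Continuous fun θ => polarPullbackθ f g (s, θ) :=
    (contDiff_polarPullbackθ hf hg).continuous.comp (.prodMk_right s)
  obtain ⟨θ, -, hθ⟩ :=
    exists_mem_Ioc_integral_le_mul two_pi_pos (hcont.intervalIntegrable 0 (2 * π))
  refine ⟨polarCoord.symm (s, θ), ?_, ?_⟩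
  · have hsq : (s * cos θ) ^ 2 + (s * sin θ) ^ 2 = s ^ 2 := by
      linear_combination s ^ 2 * cos_sq_add_sin_sq θ
    simp [hsq, hs.le]
  · have hB : polarPullbackθ f g (s, θ) ≤
        s * √(f (polarCoord.symm (s, θ)) ^ 2 + g (polarCoord.symm (s, θ)) ^ 2) :=
      mul_le_mul_of_nonneg_left (mul_cos_sub_mul_sin_le_sqrt _ _ θ) hs.le
    rw [hcirc, sub_zero] at hθ
    have hbound := hθ.trans (mul_le_mul_of_nonneg_left hB two_pi_pos.le)
    nlinarith [mul_pos pi_pos hs]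
end

section
/- Let u : (0,∞) → (0,∞) be nondecreasing and let v : (0,∞) → (0,∞) satisfy v(t)·u(v(t)) = t for all t > 0. Let b > 0, T > 0 and X > 0 be real numbers such that for every s > 0 at least one of the following holds: T ≤ 2·b·X·u(s), or X ≥ s/b. Then X ≥ v(T/2)/b. -/
/-- The dichotomy lemma from the proof of Theorem 1.4.A: if for every `s > 0`
either `T ≤ 2bX·u(s)` or `X ≥ s/b`, then `X ≥ v(T/2)/b`, where `v` is the
inverse of `s ↦ s·u(s)`. -/
theorem growth_dichotomy
    (u v : ℝ → ℝ)
    (hu_pos : ∀ s : ℝ, 0 < s → 0 < u s)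
    (hu_mono : ∀ s t : ℝ, 0 < s → s ≤ t → u s ≤ u t)
    (hv_pos : ∀ t : ℝ, 0 < t → 0 < v t)
    (hv : ∀ t : ℝ, 0 < t → v t * u (v t) = t)
    (b T X : ℝ) (hb : 0 < b) (hT : 0 < T) (hX : 0 < X)
    (hdich : ∀ s : ℝ, 0 < s → T ≤ 2 * b * X * u s ∨ s / b ≤ X) :
    v (T / 2) / b ≤ X := by
  have hT2 : 0 < T / 2 := by linarith
  set s₀ := v (T / 2) with hs₀
  have hs₀pos : 0 < s₀ := hv_pos _ hT2
  have hvs : s₀ * u s₀ = T / 2 := hv _ hT2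
  rcases hdich s₀ hs₀pos with h | h
  · have hu : 0 < u s₀ := hu_pos _ hs₀pos
    have : s₀ * u s₀ ≤ b * X * u s₀ := by linarith
    have : s₀ ≤ b * X := le_of_mul_le_mul_right this hu
    rw [div_le_iff₀ hb]; linarith
  · exact h
end

section
/- Let u : (0,∞) → (0,∞) be nondecreasing and let v : (0,∞) → (0,∞) satisfy v(t)·u(v(t)) = t for all t > 0. Let c, μ > 0 and let (cₙ) and (wₙ) be sequences of positive real numbers indexed by integers n ≥ 1 such that wₙ ≥ c·n and wₙ ≤ μ·cₙ·u(μ·cₙ) for all n. Then there exists A > 0 such that cₙ ≥ A·v(n) for all n ≥ 1. -/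
/-- The sequence lemma from the proof of Theorem 1.6.A: if `wₙ ≥ c·n` and
`wₙ ≤ μ·cₙ·u(μ·cₙ)`, then `cₙ ≥ A·v(n)` for some `A > 0`, where `v` is the
inverse of `s ↦ s·u(s)`. -/
theorem word_length_lower_bound_ham
    (u v : ℝ → ℝ)
    (hu_pos : ∀ s : ℝ, 0 < s → 0 < u s)
    (hu_mono : ∀ s t : ℝ, 0 < s → s ≤ t → u s ≤ u t)
    (hv_pos : ∀ t : ℝ, 0 < t → 0 < v t)
    (hv : ∀ t : ℝ, 0 < t → v t * u (v t) = t)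
    (c μ : ℝ) (hc : 0 < c) (hμ : 0 < μ)
    (cseq wseq : ℕ → ℝ)
    (hcseq : ∀ n : ℕ, 1 ≤ n → 0 < cseq n)
    (hwseq : ∀ n : ℕ, 1 ≤ n → 0 < wseq n)
    (hlower : ∀ n : ℕ, 1 ≤ n → c * (n : ℝ) ≤ wseq n)
    (hupper : ∀ n : ℕ, 1 ≤ n → wseq n ≤ μ * cseq n * u (μ * cseq n)) :
    ∃ A : ℝ, 0 < A ∧ ∀ n : ℕ, 1 ≤ n → A * v (n : ℝ) ≤ cseq n := by
  -- w(s) = s * u s is strictly increasing on positives; comparison lemma: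
  have hw : ∀ x y : ℝ, 0 < x → 0 < y → x * u x ≤ y * u y → x ≤ y := by
    intro x y hx hy hxy
    by_contra h
    push_neg at h
    have h1 : y * u y < x * u y := by
      exact mul_lt_mul_of_pos_right h (hu_pos y hy)
    have h2 : x * u y ≤ x * u x :=
      mul_le_mul_of_nonneg_left (hu_mono y x hy h.le) hx.le
    linarith
  set c' := min c 1 with hc'def
  have hc'pos : 0 < c' := lt_min hc one_pos
  have hc'le1 : c' ≤ 1 := min_le_right c 1
  refine ⟨c' / μ, div_pos hc'pos hμ, fun n hn => ?_⟩
  have hnpos : (0 : ℝ) < n := by exact_mod_cast Nat.pos_of_ne_zero (by omega)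
  have hcn : 0 < c * n := mul_pos hc hnpos
  set x := μ * cseq n with hxdef
  have hxpos : 0 < x := mul_pos hμ (hcseq n hn)
  -- step 1 : v (c*n) ≤ x
  have h1 : v (c * n) ≤ x := by
    apply hw _ _ (hv_pos _ hcn) hxpos
    rw [hv _ hcn]
    exact le_trans (hlower n hn) (hupper n hn)
  -- step 2 : v n ≤ v (c*n) / c'
  have hvcn := hv_pos _ hcn
  have h2 : v (n : ℝ) ≤ v (c * n) / c' := by
    have hypos : 0 < v (c * n) / c' := div_pos hvcn hc'pos
    apply hw _ _ (hv_pos _ hnpos) hypos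
    rw [hv _ hnpos]
    have hyge : v (c * n) ≤ v (c * n) / c' := by
      rw [le_div_iff₀ hc'pos]
      nlinarith
    have hu_ge : u (v (c * n)) ≤ u (v (c * n) / c') := hu_mono _ _ hvcn hyge
    have key : v (c * n) * u (v (c * n)) = c * n := hv _ hcn
    have hcc' : c' ≤ c := min_le_left c 1
    have heq : (v (c * n) / c') * u (v (c * n)) = (c * n) / c' := by
      rw [div_mul_eq_mul_div, key]
    have : (c * n) / c' ≤ (v (c * n) / c') * u (v (c * n) / c') := by
      have := mul_le_mul_of_nonneg_left hu_ge hypos.le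
      linarith
    have hn_le : (n : ℝ) ≤ (c * n) / c' := by
      rw [le_div_iff₀ hc'pos]
      nlinarith
    linarith
  -- conclude
  rw [div_mul_eq_mul_div, div_le_iff₀ hμ]
  calc c' * v (n : ℝ) ≤ c' * (v (c * n) / c') := by
        exact mul_le_mul_of_nonneg_left h2 hc'pos.le
    _ = v (c * n) := by field_simp
    _ ≤ x := h1
    _ = cseq n * μ := by rw [hxdef]; ring
end

section
/- Let u : (0,∞) → (0,∞) be nondecreasing and let v : (0,∞) → (0,∞) satisfy v(t)·u(v(t)) = t for all t > 0. Let c, μ > 0 and let (cₙ) and (wₙ) be sequences of positive real numbers indexed by integers n ≥ 1 such that wₙ ≥ c·n and 2·wₙ ≤ μ·cₙ² + μ·cₙ·u(μ·cₙ) for all n. Then there exists A > 0 such that cₙ ≥ A·min(√n, v(n)) for all n ≥ 1. -/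
/-- The sequence lemma from the proof of Theorem 1.6.B: if `wₙ ≥ c·n` and
`2wₙ ≤ μ·cₙ² + μ·cₙ·u(μ·cₙ)`, then `cₙ ≥ A·min(√n, v(n))` for some `A > 0`,
where `v` is the inverse of `s ↦ s·u(s)`. -/
theorem word_length_lower_bound_symp
    (u v : ℝ → ℝ)
    (hu_pos : ∀ s : ℝ, 0 < s → 0 < u s)
    (hu_mono : ∀ s t : ℝ, 0 < s → s ≤ t → u s ≤ u t)
    (hv_pos : ∀ t : ℝ, 0 < t → 0 < v t)
    (hv : ∀ t : ℝ, 0 < t → v t * u (v t) = t)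
    (c μ : ℝ) (hc : 0 < c) (hμ : 0 < μ)
    (cseq wseq : ℕ → ℝ)
    (hcseq : ∀ n : ℕ, 1 ≤ n → 0 < cseq n)
    (hwseq : ∀ n : ℕ, 1 ≤ n → 0 < wseq n)
    (hlower : ∀ n : ℕ, 1 ≤ n → c * (n : ℝ) ≤ wseq n)
    (hupper : ∀ n : ℕ, 1 ≤ n →
      2 * wseq n ≤ μ * cseq n ^ 2 + μ * cseq n * u (μ * cseq n)) :
    ∃ A : ℝ, 0 < A ∧ ∀ n : ℕ, 1 ≤ n →
      A * min (Real.sqrt (n : ℝ)) (v (n : ℝ)) ≤ cseq n := by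
  -- If s ≤ v t would fail, monotonicity gives a contradiction.
  have hv_le : ∀ s t : ℝ, 0 < s → 0 < t → s * u s ≤ t → s ≤ v t := by
    intro s t hs ht hst
    by_contra h
    push_neg at h
    have hvt := hv_pos t ht
    have h1 : u (v t) ≤ u s := hu_mono (v t) s hvt h.le
    have h2 : v t * u (v t) ≤ v t * u s :=
      mul_le_mul_of_nonneg_left h1 hvt.le
    have h3 : v t * u s < s * u s :=
      mul_lt_mul_of_pos_right h (hu_pos s hs)
    have : t < t := by
      calc t = v t * u (v t) := (hv t ht).symm
        _ ≤ v t * u s := h2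
        _ < s * u s := h3
        _ ≤ t := hst
    exact lt_irrefl _ this
  have hv_ge : ∀ s t : ℝ, 0 < s → 0 < t → t ≤ s * u s → v t ≤ s := by
    intro s t hs ht hst
    by_contra h
    push_neg at h
    have hvt := hv_pos t ht
    have h1 : u s ≤ u (v t) := hu_mono s (v t) hs h.le
    have h2 : s * u s ≤ s * u (v t) :=
      mul_le_mul_of_nonneg_left h1 hs.le
    have h3 : s * u (v t) < v t * u (v t) :=
      mul_lt_mul_of_pos_right h (hu_pos (v t) hvt)
    have : t < t := by
      calc t ≤ s * u s := hst
        _ ≤ s * u (v t) := h2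
        _ < v t * u (v t) := h3
        _ = t := hv t ht
    exact lt_irrefl _ this
  set A : ℝ := min (Real.sqrt (c / μ)) (min c 1 / μ) with hA
  have hA1 : 0 < Real.sqrt (c / μ) := Real.sqrt_pos.mpr (div_pos hc hμ)
  have hA2 : 0 < min c 1 / μ := div_pos (lt_min hc one_pos) hμ
  refine ⟨A, lt_min hA1 hA2, ?_⟩
  intro n hn
  have hn' : (0 : ℝ) < (n : ℝ) := by exact_mod_cast Nat.pos_of_ne_zero (by omega)
  have hcn : 0 < c * (n : ℝ) := mul_pos hc hn'
  have hcs := hcseq n hn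
  have hμcs : 0 < μ * cseq n := mul_pos hμ hcs
  have hvn := hv_pos (n : ℝ) hn'
  have hsn : 0 ≤ Real.sqrt (n : ℝ) := Real.sqrt_nonneg _
  have hmin_nonneg : 0 ≤ min (Real.sqrt (n : ℝ)) (v (n : ℝ)) :=
    le_min hsn hvn.le
  have hsum : 2 * (c * (n : ℝ)) ≤ μ * cseq n ^ 2 + μ * cseq n * u (μ * cseq n) := by
    have := hupper n hn
    have h1 := hlower n hn
    nlinarith
  by_cases hcase : c * (n : ℝ) ≤ μ * cseq n ^ 2
  · -- cseq n ≥ sqrt(c/μ) * sqrt n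
    have h1 : c / μ * (n : ℝ) ≤ cseq n ^ 2 := by
      rw [div_mul_eq_mul_div, div_le_iff₀ hμ]
      nlinarith
    have h2 : Real.sqrt (c / μ * (n : ℝ)) ≤ cseq n := by
      calc Real.sqrt (c / μ * (n : ℝ)) ≤ Real.sqrt (cseq n ^ 2) :=
            Real.sqrt_le_sqrt h1
        _ = cseq n := Real.sqrt_sq hcs.le
    have h3 : Real.sqrt (c / μ * (n : ℝ)) = Real.sqrt (c / μ) * Real.sqrt (n : ℝ) :=
      Real.sqrt_mul (div_pos hc hμ).le _
    calc A * min (Real.sqrt (n : ℝ)) (v (n : ℝ))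
        ≤ Real.sqrt (c / μ) * Real.sqrt (n : ℝ) := by
          apply mul_le_mul (min_le_left _ _) (min_le_left _ _) hmin_nonneg hA1.le
      _ = Real.sqrt (c / μ * (n : ℝ)) := h3.symm
      _ ≤ cseq n := h2
  · push_neg at hcase
    have h1 : c * (n : ℝ) ≤ (μ * cseq n) * u (μ * cseq n) := by nlinarith
    have h2 : v (c * (n : ℝ)) ≤ μ * cseq n := hv_ge _ _ hμcs hcn h1
    -- min c 1 * v n ≤ v (c * n)
    have hc1 : 0 < min c 1 := lt_min hc one_pos
    have hs : 0 < min c 1 * v (n : ℝ) := mul_pos hc1 hvn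
    have h3 : min c 1 * v (n : ℝ) * u (min c 1 * v (n : ℝ)) ≤ c * (n : ℝ) := by
      have hle : min c 1 * v (n : ℝ) ≤ v (n : ℝ) := by
        nlinarith [min_le_right c 1]
      have humono : u (min c 1 * v (n : ℝ)) ≤ u (v (n : ℝ)) :=
        hu_mono _ _ hs hle
      have hupos := hu_pos _ hs
      have hvv := hv (n : ℝ) hn'
      have hminc : min c 1 ≤ c := min_le_left _ _
      nlinarith [hu_pos (v (n : ℝ)) hvn]
    have h4 : min c 1 * v (n : ℝ) ≤ v (c * (n : ℝ)) := hv_le _ _ hs hcn h3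
    have h5 : min c 1 * v (n : ℝ) ≤ μ * cseq n := h4.trans h2
    have h6 : min c 1 / μ * v (n : ℝ) ≤ cseq n := by
      rw [div_mul_eq_mul_div, div_le_iff₀ hμ]
      nlinarith
    calc A * min (Real.sqrt (n : ℝ)) (v (n : ℝ))
        ≤ (min c 1 / μ) * v (n : ℝ) := by
          apply mul_le_mul (min_le_right _ _) (min_le_right _ _) hmin_nonneg hA2.le
      _ ≤ cseq n := h6
end
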